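/- arXiv:1801.02359 — 3 statements merged into one kernel-verified Lean document; each statement's English description precedes it below -/
import Mathlib

section
/- For natural numbers k ≤ n and any real s, ∫_ℝ e^{sx − x²} H_n(x) H_k(x) dx = (√π · n! · 2^k / (n−k)!) · e^{s²/4} · s^{n−k} · ₁F₁(−k; n−k+1; −s²/2). -/
open Real MeasureTheory

/-- Physicists' Hermite polynomial `H n x = (-1)^n e^{x^2} (d/dx)^n e^{-x^2}`. -/
noncomputable def physHermite (n : ℕ) (x : ℝ) : ℝ :=
  (-1)^n * Real.exp (x^2) * iteratedDeriv n (fun y => Real.exp (-y^2)) x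

/-- Hermite function `φ k x = (2^k k! √π)^{-1/2} H_k(x) e^{-x²/2}`. -/
noncomputable def hermiteFn (k : ℕ) (x : ℝ) : ℝ :=
  (Real.sqrt (2^k * k.factorial * Real.sqrt Real.pi))⁻¹ * physHermite k x * Real.exp (-x^2/2)

/-- Confluent hypergeometric function `₁F₁(-k; b; x)` with nonpositive integer first
parameter `-k`; it is the polynomial `∑_{j=0}^{k} ((-k)_j/(b)_j) x^j/j!`, where the rising
factorial `(-k)_j = (-1)^j k!/(k-j)!`. -/
noncomputable def oneF1neg (k : ℕ) (b x : ℝ) : ℝ :=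
  ∑ j ∈ Finset.range (k+1),
    ((-1)^j * (k.descFactorial j : ℝ) / ∏ i ∈ Finset.range j, (b + i)) * x^j / (j.factorial : ℝ)

/-- GUE mean density at σ² = 1/2: partial sum of squared Hermite functions. -/
noncomputable def pGUE (n : ℕ) (x : ℝ) : ℝ := ∑ k ∈ Finset.range n, hermiteFn k x ^ 2

/-- GUE mean density with general variance σ². -/
noncomputable def pGUEvar (n : ℕ) (σ x : ℝ) : ℝ :=
  (σ * Real.sqrt 2)⁻¹ * pGUE n (x / (σ * Real.sqrt 2))

/-- The function τₙ from the GSE/GOE densities. -/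
noncomputable def tauFn (n : ℕ) (x : ℝ) : ℝ :=
  Real.sqrt (n/2) * hermiteFn (n-1) x *
    ((1/2) * ∫ t : ℝ, Real.sign (x - t) * hermiteFn n t)

/-- The function αₙ (for odd n) from the GOE density. -/
noncomputable def alphaFn (n : ℕ) (x : ℝ) : ℝ :=
  hermiteFn (n-1) x / ∫ t : ℝ, hermiteFn (n-1) t

/-!
Since `H_n(x) e^{-x²} = (-1)^n (d/dx)^n e^{-x²}`, integrating by parts `n` times moves the
derivatives onto `e^{sx} H_k(x)` and turns the integral into `∫ ((d/dx + s)^n H_k) e^{sx - x²}`.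
As `H_k' = 2k H_{k-1}`, the binomial expansion of `(d/dx + s)^n H_k` is a combination of the
`H_{k-m}`, and `∫ H_j e^{sx - x²} = √π e^{s²/4} s^j` by the same argument applied to `H_0 = 1`.
Reindexing the resulting finite sum by `j = k - m` gives the `₁F₁` series.
-/

open Polynomial
open scoped Nat

noncomputable def physHermitePoly : ℕ → ℝ[X]
  | 0 => 1
  | n + 1 => C 2 * X * physHermitePoly n - derivative (physHermitePoly n)

lemma iteratedDeriv_exp_neg_sq (n : ℕ) (x : ℝ) :
    iteratedDeriv n (fun y => exp (-y ^ 2)) x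
      = (-1) ^ n * (physHermitePoly n).eval x * exp (-x ^ 2) := by
  induction n generalizing x with
  | zero => simp [physHermitePoly]
  | succ n ih =>
    rw [iteratedDeriv_succ, funext ih]
    have hgauss : HasDerivAt (fun y : ℝ => exp (-y ^ 2)) (exp (-x ^ 2) * (-(2 * x))) x :=
      ((hasDerivAt_pow 2 x).neg.congr_deriv (by ring)).exp
    refine ((((physHermitePoly n).hasDerivAt x).const_mul ((-1 : ℝ) ^ n)).mul
      hgauss).deriv.trans ?_
    simp only [physHermitePoly, eval_sub, eval_mul, eval_C, eval_X]
    ring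

lemma physHermite_eq_eval (n : ℕ) (x : ℝ) : physHermite n x = (physHermitePoly n).eval x := by
  have hsign : ((-1 : ℝ) ^ n) ^ 2 = 1 := by rw [pow_right_comm, neg_one_sq, one_pow]
  have hexp : exp (x ^ 2) * exp (-x ^ 2) = 1 := by rw [← exp_add]; simp
  rw [physHermite, iteratedDeriv_exp_neg_sq]
  linear_combination (physHermitePoly n).eval x * exp (x ^ 2) * exp (-x ^ 2) * hsign
    + (physHermitePoly n).eval x * hexp

lemma derivative_physHermitePoly_succ (n : ℕ) :
    derivative (physHermitePoly (n + 1)) = C (2 * (n + 1 : ℝ)) * physHermitePoly n := by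
  induction n with
  | zero => simp [physHermitePoly]
  | succ n ih =>
    rw [physHermitePoly, derivative_sub, derivative_mul, ih, derivative_mul, derivative_C,
      derivative_mul, derivative_C, derivative_X, physHermitePoly]
    simp only [map_mul, map_add, map_ofNat, map_natCast, map_one, Nat.cast_add, Nat.cast_one]
    ring

lemma derivative_physHermitePoly (n : ℕ) :
    derivative (physHermitePoly n) = (2 * n : ℝ) • physHermitePoly (n - 1) := by
  cases n with
  | zero => simp [physHermitePoly]
  | succ n => simp [derivative_physHermitePoly_succ, smul_eq_C_mul]

lemma iterate_derivative_physHermitePoly (j k : ℕ) :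
    derivative^[j] (physHermitePoly k)
      = (2 ^ j * k.descFactorial j : ℝ) • physHermitePoly (k - j) := by
  induction j with
  | zero => simp
  | succ j ih =>
    rw [Function.iterate_succ_apply', ih, map_smul, derivative_physHermitePoly, smul_smul,
      Nat.descFactorial_succ, Nat.sub_sub]
    congr 1
    rcases le_or_gt k j with hkj | hjk
    · simp [Nat.sub_eq_zero_of_le hkj]
    · push_cast [hjk.le]
      ring

-- `e^{-sx} ∘ d/dx ∘ e^{sx}`
noncomputable def twistedDerivative (s : ℝ) : Module.End ℝ ℝ[X] := derivative + s • 1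

lemma twistedDerivative_apply (s : ℝ) (p : ℝ[X]) :
    twistedDerivative s p = derivative p + C s * p := by
  simp [twistedDerivative, smul_eq_C_mul]

lemma twistedDerivative_pow_apply (s : ℝ) (n : ℕ) (p : ℝ[X]) :
    (twistedDerivative s ^ n) p
      = ∑ m ∈ Finset.range (n + 1), (n.choose m * s ^ (n - m)) • derivative^[m] p := by
  rw [twistedDerivative, ((Commute.one_right _).smul_right s).add_pow, LinearMap.sum_apply]
  refine Finset.sum_congr rfl fun m _ => ?_
  rw [Module.End.mul_apply, Module.End.mul_apply, _root_.smul_pow, one_pow,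
    Module.End.natCast_apply, LinearMap.smul_apply, Module.End.one_apply, map_smul, map_nsmul,
    Module.End.pow_apply, ← Nat.cast_smul_eq_nsmul ℝ, smul_smul, mul_comm]

lemma integrable_eval_mul_exp_neg_sq (p : ℝ[X]) :
    Integrable fun x : ℝ => p.eval x * exp (-x ^ 2) := by
  induction p using Polynomial.induction_on' with
  | add p q hp hq =>
    simp only [eval_add, add_mul]
    exact hp.add hq
  | monomial n a =>
    have hpow : Integrable fun x : ℝ => x ^ (n : ℝ) * exp (-1 * x ^ 2) :=
      integrable_rpow_mul_exp_neg_mul_sq one_pos (neg_one_lt_zero.trans_le n.cast_nonneg)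
    simpa [mul_assoc] using hpow.const_mul a

lemma exp_mul_sub_sq (s x : ℝ) :
    exp (s * x - x ^ 2) = exp (s ^ 2 / 4) * exp (-(x - s / 2) ^ 2) := by
  rw [← exp_add]
  ring_nf

lemma integrable_eval_mul_exp_mul_sub_sq (s : ℝ) (p : ℝ[X]) :
    Integrable fun x : ℝ => p.eval x * exp (s * x - x ^ 2) := by
  have hshift := ((integrable_eval_mul_exp_neg_sq (p.comp (X + C (s / 2)))).comp_sub_right
    (s / 2)).mul_const (exp (s ^ 2 / 4))
  refine hshift.congr (Filter.Eventually.of_forall fun x => ?_)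
  simp only [eval_comp, eval_add, eval_X, eval_C, sub_add_cancel, exp_mul_sub_sq]
  ring

lemma integral_exp_mul_sub_sq (s : ℝ) :
    ∫ x : ℝ, exp (s * x - x ^ 2) = √π * exp (s ^ 2 / 4) := by
  simp_rw [exp_mul_sub_sq, integral_const_mul,
    integral_sub_right_eq_self (fun x => exp (-x ^ 2)) (s / 2)]
  rw [show ∫ x : ℝ, exp (-x ^ 2) = √π by simpa using integral_gaussian 1, mul_comm]

noncomputable def gaussianMoment (s : ℝ) : ℝ[X] →ₗ[ℝ] ℝ where
  toFun p := ∫ x, p.eval x * exp (s * x - x ^ 2)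
  map_add' p q := by
    simp only [eval_add, add_mul]
    exact integral_add (integrable_eval_mul_exp_mul_sub_sq s p)
      (integrable_eval_mul_exp_mul_sub_sq s q)
  map_smul' c p := by simp only [eval_smul, smul_eq_mul, mul_assoc, integral_const_mul,
    RingHom.id_apply]

lemma gaussianMoment_apply (s : ℝ) (p : ℝ[X]) :
    gaussianMoment s p = ∫ x, p.eval x * exp (s * x - x ^ 2) := rfl

lemma gaussianMoment_one (s : ℝ) : gaussianMoment s 1 = √π * exp (s ^ 2 / 4) := by
  simp [gaussianMoment_apply, integral_exp_mul_sub_sq]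

lemma gaussianMoment_derivative_add (s : ℝ) (q : ℝ[X]) :
    gaussianMoment s (derivative q + (C s - C 2 * X) * q) = 0 := by
  have hderiv (x : ℝ) : HasDerivAt (fun y => q.eval y * exp (s * y - y ^ 2))
      ((derivative q + (C s - C 2 * X) * q).eval x * exp (s * x - x ^ 2)) x := by
    have hexp : HasDerivAt (fun y => exp (s * y - y ^ 2)) (exp (s * x - x ^ 2) * (s - 2 * x)) x :=
      (((hasDerivAt_id x).const_mul s).sub (hasDerivAt_pow 2 x)).exp.congr_deriv (by simp)
    refine ((q.hasDerivAt x).mul hexp).congr_deriv ?_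
    simp only [eval_add, eval_mul, eval_sub, eval_C, eval_X]
    ring
  exact integral_eq_zero_of_hasDerivAt_of_integrable hderiv
    (integrable_eval_mul_exp_mul_sub_sq s _) (integrable_eval_mul_exp_mul_sub_sq s q)

lemma gaussianMoment_mul_physHermitePoly_succ (s : ℝ) (p : ℝ[X]) (m : ℕ) :
    gaussianMoment s (p * physHermitePoly (m + 1))
      = gaussianMoment s (twistedDerivative s p * physHermitePoly m) := by
  have hibp := gaussianMoment_derivative_add s (p * physHermitePoly m)
  rw [show derivative (p * physHermitePoly m) + (C s - C 2 * X) * (p * physHermitePoly m)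
      = twistedDerivative s p * physHermitePoly m - p * physHermitePoly (m + 1) by
    rw [twistedDerivative_apply, physHermitePoly, derivative_mul]; ring,
    map_sub, sub_eq_zero] at hibp
  exact hibp.symm

lemma gaussianMoment_mul_physHermitePoly (s : ℝ) (p : ℝ[X]) (m : ℕ) :
    gaussianMoment s (p * physHermitePoly m)
      = gaussianMoment s ((twistedDerivative s ^ m) p) := by
  induction m generalizing p with
  | zero => simp [physHermitePoly]
  | succ m ih => rw [gaussianMoment_mul_physHermitePoly_succ, ih, pow_succ, Module.End.mul_apply]

lemma twistedDerivative_pow_apply_one (s : ℝ) (j : ℕ) :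
    (twistedDerivative s ^ j) 1 = C (s ^ j) := by
  induction j with
  | zero => simp
  | succ j ih =>
    rw [pow_succ', Module.End.mul_apply, ih, twistedDerivative_apply, derivative_C, zero_add,
      ← C_mul, pow_succ']

lemma gaussianMoment_physHermitePoly (s : ℝ) (j : ℕ) :
    gaussianMoment s (physHermitePoly j) = √π * exp (s ^ 2 / 4) * s ^ j := by
  rw [← one_mul (physHermitePoly j), gaussianMoment_mul_physHermitePoly,
    twistedDerivative_pow_apply_one, ← mul_one (C _), ← smul_eq_C_mul, map_smul,
    gaussianMoment_one, smul_eq_mul]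
  ring

lemma gaussianMoment_physHermitePoly_mul (s : ℝ) (n k : ℕ) :
    gaussianMoment s (physHermitePoly k * physHermitePoly n)
      = √π * exp (s ^ 2 / 4) * ∑ m ∈ Finset.range (n + 1),
          (n.choose m * 2 ^ m * k.descFactorial m : ℝ) * s ^ (n - m) * s ^ (k - m) := by
  rw [gaussianMoment_mul_physHermitePoly, twistedDerivative_pow_apply, map_sum, Finset.mul_sum]
  refine Finset.sum_congr rfl fun m _ => ?_
  rw [iterate_derivative_physHermitePoly, smul_smul, map_smul, gaussianMoment_physHermitePoly,
    smul_eq_mul]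
  ring

lemma choose_mul_descFactorial_mul_factorial {n k j : ℕ} (hkn : k ≤ n) (hjk : j ≤ k) :
    n.choose (k - j) * k.descFactorial (k - j) * ((n - k)! * (n - k + 1).ascFactorial j * j !)
      = n ! * k.descFactorial j := by
  have hchoose := Nat.choose_mul_factorial_mul_factorial (show k - j ≤ n by omega)
  have hdesc := Nat.factorial_mul_descFactorial (show k - j ≤ k by omega)
  rw [Nat.sub_sub_self hjk] at hdesc
  rw [Nat.factorial_mul_ascFactorial, show n - k + j = n - (k - j) by omega]
  calc n.choose (k - j) * k.descFactorial (k - j) * ((n - (k - j))! * j !)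
      = n.choose (k - j) * (n - (k - j))! * (j ! * k.descFactorial (k - j)) := by ring
    _ = n.choose (k - j) * (n - (k - j))! * ((k - j)! * k.descFactorial j) := by
      rw [hdesc, Nat.factorial_mul_descFactorial hjk]
    _ = n ! * k.descFactorial j := by rw [← hchoose]; ring

lemma sum_choose_mul_descFactorial_eq_oneF1neg {n k : ℕ} (hkn : k ≤ n) (s : ℝ) :
    ∑ m ∈ Finset.range (n + 1),
        (n.choose m * 2 ^ m * k.descFactorial m : ℝ) * s ^ (n - m) * s ^ (k - m)
      = n ! * 2 ^ k / (n - k)! * s ^ (n - k) * oneF1neg k ((n - k : ℕ) + 1) (-s ^ 2 / 2) := by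
  have hvanish (m : ℕ) (hm : m ∉ Finset.range (k + 1)) :
      (n.choose m * 2 ^ m * k.descFactorial m : ℝ) * s ^ (n - m) * s ^ (k - m) = 0 := by
    rw [Nat.descFactorial_eq_zero_iff_lt.2 (by simpa using hm)]
    simp
  rw [← Finset.sum_subset (Finset.range_subset_range.2 (by omega)) fun m _ => hvanish m,
    ← Finset.sum_range_reflect, oneF1neg, Finset.mul_sum]
  refine Finset.sum_congr rfl fun j hj => ?_
  have hjk : j ≤ k := Nat.lt_succ_iff.1 (Finset.mem_range.1 hj)
  have hprod :
      ∏ i ∈ Finset.range j, (((n - k : ℕ) : ℝ) + 1 + i) = (n - k + 1).ascFactorial j := by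
    push_cast [Nat.ascFactorial_eq_prod_range]
    rfl
  have hcoef : (n.choose (k - j) * k.descFactorial (k - j) : ℝ)
      * ((n - k)! * (n - k + 1).ascFactorial j * j !) = n ! * k.descFactorial j := by
    exact_mod_cast choose_mul_descFactorial_mul_factorial hkn hjk
  rw [hprod, Nat.add_sub_cancel, show n - (k - j) = n - k + j by omega, Nat.sub_sub_self hjk,
    show (-s ^ 2 / 2) ^ j = (-1) ^ j * (s ^ j * s ^ j) / 2 ^ j by rw [div_pow, neg_pow]; ring,
    pow_add s, show (2 : ℝ) ^ k = 2 ^ (k - j) * 2 ^ j by rw [← pow_add, Nat.sub_add_cancel hjk]]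
  have hasc : (0 : ℝ) < (n - k + 1).ascFactorial j := by exact_mod_cast Nat.ascFactorial_pos _ _
  have hsign : ((-1 : ℝ) ^ j) ^ 2 = 1 := by rw [pow_right_comm, neg_one_sq, one_pow]
  field_simp
  linear_combination s ^ (n - k) * (s ^ j) ^ 2 * hcoef
    - s ^ (n - k) * (s ^ j) ^ 2 * n ! * k.descFactorial j * hsign

theorem integral_exp_mul_hermite_mul_hermite (n k : ℕ) (hkn : k ≤ n) (s : ℝ) :
    ∫ x : ℝ, Real.exp (s*x - x^2) * physHermite n x * physHermite k x =
      Real.sqrt Real.pi * (n.factorial : ℝ) * 2^k / ((n-k).factorial : ℝ) *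
        Real.exp (s^2/4) * s^(n-k) * oneF1neg k ((n-k : ℕ) + 1) (-s^2/2) := by
  have hintegrand : (fun x => exp (s * x - x ^ 2) * physHermite n x * physHermite k x)
      = fun x => (physHermitePoly k * physHermitePoly n).eval x * exp (s * x - x ^ 2) := by
    ext x
    rw [physHermite_eq_eval, physHermite_eq_eval, eval_mul]
    ring
  rw [hintegrand, ← gaussianMoment_apply, gaussianMoment_physHermitePoly_mul,
    sum_choose_mul_descFactorial_eq_oneF1neg hkn]
  ring
end

section
/- The GUE mean density p_u(x) = ∑_{k=0}^{n−1} φ_k(x)² satisfies the third-order differential equation (1/4) p_u'''(x) + (2n − x²) p_u'(x) + x p_u(x) = 0 for every real x. Equivalently, for general variance σ², p(x) = (σ√2)^{−1} ∑_{k=0}^{n−1} φ_k(x/(σ√2))² satisfies σ⁴ p''' + (4nσ² − x²) p' + x p = 0. -/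
open Real MeasureTheory

/-!
The Hermite functions satisfy the ladder relations `x φₖ = aₖ φₖ₋₁ + aₖ₊₁ φₖ₊₁` and
`φₖ' = aₖ φₖ₋₁ - aₖ₊₁ φₖ₊₁` with `aₖ = √(k/2)`, hence the oscillator equation
`φₖ'' = (x² - 2k - 1) φₖ`. Whenever `f'' = V f`, one has `(f²)''' = 8 V f f' + 2 V' f²`, so the
summand `φₖ²` contributes `2 (2n - 2k - 1) φₖ φₖ' + 2 x φₖ²` to `p'''/4 + (2n - x²) p' + x p`.
By the ladder relations this is `Tₖ - Tₖ₊₁` with `Tₖ = 4 (n - k) aₖ φₖ₋₁ φₖ`, and the sum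
telescopes to `T₀ - Tₙ = 0`. The equation for variance `σ²` is the same identity in the variable
`x / (σ √2)`.
-/

open scoped ContDiff

lemma contDiff_iteratedDeriv_exp_neg_sq (n : ℕ) :
    ContDiff ℝ ∞ (iteratedDeriv n (fun y : ℝ => exp (-y ^ 2))) := by
  rw [iteratedDeriv_eq_iterate]
  exact ContDiff.iterate_deriv n (by fun_prop)

lemma hasDerivAt_exp_neg_sq (x : ℝ) :
    HasDerivAt (fun y : ℝ => exp (-y ^ 2)) (-2 * x * exp (-x ^ 2)) x := by
  convert ((hasDerivAt_pow 2 x).fun_neg).exp using 1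
  push_cast
  ring

lemma hasDerivAt_iteratedDeriv_exp_neg_sq (n : ℕ) (x : ℝ) :
    HasDerivAt (iteratedDeriv n (fun y : ℝ => exp (-y ^ 2)))
      (iteratedDeriv (n + 1) (fun y : ℝ => exp (-y ^ 2)) x) x := by
  rw [iteratedDeriv_succ]
  exact ((contDiff_iteratedDeriv_exp_neg_sq n).differentiable (by simp) x).hasDerivAt

lemma iteratedDeriv_exp_neg_sq_succ_succ (n : ℕ) (x : ℝ) :
    iteratedDeriv (n + 2) (fun y : ℝ => exp (-y ^ 2)) x =
      -2 * x * iteratedDeriv (n + 1) (fun y : ℝ => exp (-y ^ 2)) x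
        - 2 * (n + 1) * iteratedDeriv n (fun y : ℝ => exp (-y ^ 2)) x := by
  induction n generalizing x with
  | zero =>
    have h1 : iteratedDeriv 1 (fun y : ℝ => exp (-y ^ 2)) = fun y => -2 * y * exp (-y ^ 2) :=
      funext fun y => by rw [iteratedDeriv_one, (hasDerivAt_exp_neg_sq y).deriv]
    rw [iteratedDeriv_succ, h1, iteratedDeriv_zero]
    refine (((hasDerivAt_id' x).const_mul (-2)).mul (hasDerivAt_exp_neg_sq x)).deriv.trans ?_
    push_cast
    ring
  | succ n ih =>
    rw [iteratedDeriv_succ]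
    conv_lhs => rw [funext ih]
    refine ((((hasDerivAt_id' x).const_mul (-2)).mul (hasDerivAt_iteratedDeriv_exp_neg_sq _ x)).sub
      ((hasDerivAt_iteratedDeriv_exp_neg_sq _ x).const_mul _)).deriv.trans ?_
    push_cast
    ring

lemma physHermite_succ (n : ℕ) (x : ℝ) :
    physHermite (n + 1) x = 2 * x * physHermite n x - 2 * n * physHermite (n - 1) x := by
  cases n with
  | zero =>
    simp only [physHermite, zero_add, iteratedDeriv_one, iteratedDeriv_zero,
      (hasDerivAt_exp_neg_sq x).deriv]
    ring
  | succ n =>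
    simp only [physHermite, Nat.add_sub_cancel, iteratedDeriv_exp_neg_sq_succ_succ]
    push_cast
    ring

lemma hasDerivAt_physHermite (n : ℕ) (x : ℝ) :
    HasDerivAt (physHermite n) (2 * n * physHermite (n - 1) x) x := by
  have h : HasDerivAt (physHermite n) (2 * x * physHermite n x - physHermite (n + 1) x) x :=
    ((((hasDerivAt_pow 2 x).exp).const_mul ((-1 : ℝ) ^ n)).fun_mul
      (hasDerivAt_iteratedDeriv_exp_neg_sq n x)).congr_deriv (by
        simp only [physHermite, pow_succ]
        push_cast
        ring)
  rwa [physHermite_succ, sub_sub_cancel] at h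

noncomputable def hermiteFnConst (k : ℕ) : ℝ := (√(2 ^ k * k.factorial * √π))⁻¹

-- In the ladder relations `hermiteFn (k - 1)` at `k = 0` is `hermiteFn 0` (truncated
-- subtraction); it is harmless there because it is multiplied by `hermiteLadder 0 = 0`.
noncomputable def hermiteLadder (k : ℕ) : ℝ := √(k / 2)

lemma hermiteLadder_zero : hermiteLadder 0 = 0 := by simp [hermiteLadder]

lemma hermiteLadder_sq (k : ℕ) : hermiteLadder k ^ 2 = k / 2 :=
  sq_sqrt (by positivity)

lemma hermiteLadder_succ_mul_hermiteFnConst_succ (k : ℕ) :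
    hermiteLadder (k + 1) * hermiteFnConst (k + 1) = hermiteFnConst k / 2 := by
  have h : (2 : ℝ) ^ (k + 1) * (k + 1).factorial * √π
      = 2 ^ 2 * ((k + 1 : ℕ) / 2) * (2 ^ k * k.factorial * √π) := by
    push_cast [Nat.factorial_succ]; ring
  rw [hermiteFnConst, hermiteFnConst, hermiteLadder, h, sqrt_mul (by positivity),
    sqrt_mul (by positivity), sqrt_sq (by norm_num)]
  field_simp

lemma hermiteLadder_mul_hermiteFnConst_pred (k : ℕ) :
    hermiteLadder k * hermiteFnConst (k - 1) = k * hermiteFnConst k := by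
  cases k with
  | zero => simp [hermiteLadder_zero]
  | succ k =>
    rw [Nat.add_sub_cancel]
    linear_combination (-2 * hermiteLadder (k + 1)) * hermiteLadder_succ_mul_hermiteFnConst_succ k
      + (2 * hermiteFnConst (k + 1)) * hermiteLadder_sq (k + 1)

lemma hermiteFn_eq (k : ℕ) (x : ℝ) :
    hermiteFn k x = hermiteFnConst k * physHermite k x * exp (-x ^ 2 / 2) := rfl

lemma mul_hermiteFn (k : ℕ) (x : ℝ) :
    x * hermiteFn k x
      = hermiteLadder k * hermiteFn (k - 1) x + hermiteLadder (k + 1) * hermiteFn (k + 1) x := by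
  simp only [hermiteFn_eq]
  linear_combination (-(physHermite (k - 1) x * exp (-x ^ 2 / 2)))
      * hermiteLadder_mul_hermiteFnConst_pred k
    - physHermite (k + 1) x * exp (-x ^ 2 / 2) * hermiteLadder_succ_mul_hermiteFnConst_succ k
    - hermiteFnConst k * exp (-x ^ 2 / 2) / 2 * physHermite_succ k x

lemma hasDerivAt_hermiteFn (k : ℕ) (x : ℝ) :
    HasDerivAt (hermiteFn k)
      (hermiteLadder k * hermiteFn (k - 1) x - hermiteLadder (k + 1) * hermiteFn (k + 1) x) x := by
  have hexp : HasDerivAt (fun y : ℝ => exp (-y ^ 2 / 2)) (-x * exp (-x ^ 2 / 2)) x := by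
    convert ((hasDerivAt_pow 2 x).fun_neg.div_const 2).exp using 1
    push_cast
    ring
  refine (((hasDerivAt_physHermite k x).const_mul (hermiteFnConst k)).fun_mul hexp).congr_deriv ?_
  simp only [hermiteFn_eq]
  linear_combination (-(physHermite (k - 1) x * exp (-x ^ 2 / 2)))
      * hermiteLadder_mul_hermiteFnConst_pred k
    + physHermite (k + 1) x * exp (-x ^ 2 / 2) * hermiteLadder_succ_mul_hermiteFnConst_succ k
    + hermiteFnConst k * exp (-x ^ 2 / 2) / 2 * physHermite_succ k x

lemma deriv_hermiteFn (k : ℕ) :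
    deriv (hermiteFn k)
      = fun x =>
        hermiteLadder k * hermiteFn (k - 1) x - hermiteLadder (k + 1) * hermiteFn (k + 1) x :=
  funext fun x => (hasDerivAt_hermiteFn k x).deriv

lemma hasDerivAt_deriv_hermiteFn (k : ℕ) (x : ℝ) :
    HasDerivAt (deriv (hermiteFn k)) ((x ^ 2 - (2 * k + 1)) * hermiteFn k x) x := by
  rw [deriv_hermiteFn]
  refine (((hasDerivAt_hermiteFn (k - 1) x).const_mul _).fun_sub
    ((hasDerivAt_hermiteFn (k + 1) x).const_mul _)).congr_deriv ?_
  cases k with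
  | zero =>
    simp only [hermiteLadder_zero, Nat.zero_sub, zero_add, Nat.reduceAdd]
    push_cast
    linear_combination -x * mul_hermiteFn 0 x - hermiteLadder 1 * mul_hermiteFn 1 x
      - 2 * hermiteFn 0 x * hermiteLadder_sq 1 - hermiteFn 0 x * x * hermiteLadder_zero
  | succ j =>
    have e1 := mul_hermiteFn (j + 1) x
    have e2 := mul_hermiteFn (j + 2) x
    have s1 := hermiteLadder_sq (j + 1)
    have s2 := hermiteLadder_sq (j + 2)
    simp only [Nat.add_sub_cancel, Nat.reduceSubDiff] at e1 e2 ⊢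
    push_cast at s1 s2 ⊢
    linear_combination -hermiteLadder (j + 1) * mul_hermiteFn j x - x * e1
      - hermiteLadder (j + 2) * e2 - 2 * hermiteFn (j + 1) x * s1 - 2 * hermiteFn (j + 1) x * s2

lemma contDiff_hermiteFn (k : ℕ) : ContDiff ℝ ∞ (hermiteFn k) := by
  have := contDiff_iteratedDeriv_exp_neg_sq k
  unfold hermiteFn physHermite
  fun_prop

lemma iteratedDeriv_three_sq {f V : ℝ → ℝ} (hf : ContDiff ℝ 3 f) (hV : Differentiable ℝ V)
    (h : iteratedDeriv 2 f = fun y => V y * f y) (x : ℝ) :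
    iteratedDeriv 3 (fun y => f y ^ 2) x
      = 8 * V x * f x * deriv f x + 2 * deriv V x * f x ^ 2 := by
  have hf1 : Differentiable ℝ f := hf.differentiable (by norm_num)
  have h3 : iteratedDeriv 3 f x = deriv V x * f x + V x * deriv f x := by
    rw [iteratedDeriv_succ, h]
    exact deriv_fun_mul (hV x) (hf1 x)
  simp only [sq]
  rw [iteratedDeriv_fun_mul hf.contDiffAt hf.contDiffAt]
  simp only [Finset.sum_range_succ, Finset.range_one, Finset.sum_singleton, Nat.choose,
    Nat.cast_one, Nat.cast_ofNat, iteratedDeriv_zero, iteratedDeriv_one, one_mul, add_zero,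
    tsub_zero, tsub_self, Nat.reduceAdd, Nat.reduceSub, Nat.add_one_sub_one, h, h3]
  ring

noncomputable def gueTelescopingTerm (n k : ℕ) (x : ℝ) : ℝ :=
  4 * (n - k) * hermiteLadder k * hermiteFn (k - 1) x * hermiteFn k x

lemma hermiteFn_sq_ode (n k : ℕ) (x : ℝ) :
    (1 / 4) * iteratedDeriv 3 (fun y => hermiteFn k y ^ 2) x
        + (2 * n - x ^ 2) * deriv (fun y => hermiteFn k y ^ 2) x + x * hermiteFn k x ^ 2
      = gueTelescopingTerm n k x - gueTelescopingTerm n (k + 1) x := by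
  have h2 : iteratedDeriv 2 (hermiteFn k) = fun y => (y ^ 2 - (2 * k + 1)) * hermiteFn k y := by
    rw [iteratedDeriv_succ, iteratedDeriv_one]
    exact funext fun y => (hasDerivAt_deriv_hermiteFn k y).deriv
  have hV : ∀ y : ℝ, HasDerivAt (fun y : ℝ => y ^ 2 - (2 * k + 1)) (2 * y) y := fun y => by
    simpa using (hasDerivAt_pow 2 y).sub_const ((2 : ℝ) * k + 1)
  rw [iteratedDeriv_three_sq ((contDiff_hermiteFn k).of_le (by norm_cast))
      (fun y => (hV y).differentiableAt) h2, (hV x).deriv,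
    ((hasDerivAt_hermiteFn k x).fun_pow 2).deriv, (hasDerivAt_hermiteFn k x).deriv]
  simp only [gueTelescopingTerm, Nat.add_sub_cancel]
  push_cast
  linear_combination 2 * hermiteFn k x * mul_hermiteFn k x

lemma pGUE_ode (n : ℕ) (x : ℝ) :
    (1 / 4) * iteratedDeriv 3 (pGUE n) x + (2 * n - x ^ 2) * deriv (pGUE n) x + x * pGUE n x
      = 0 := by
  have hsq : ∀ k, ContDiff ℝ ∞ (fun y => hermiteFn k y ^ 2) := fun k => (contDiff_hermiteFn k).pow 2
  have hp : pGUE n = fun y => ∑ k ∈ Finset.range n, hermiteFn k y ^ 2 := rfl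
  rw [hp, iteratedDeriv_fun_sum fun k _ => (hsq k).contDiffAt.of_le (by norm_cast),
    deriv_fun_sum fun k _ => ((hsq k).differentiable (by simp)).differentiableAt,
    Finset.mul_sum, Finset.mul_sum, Finset.mul_sum, ← Finset.sum_add_distrib,
    ← Finset.sum_add_distrib, Finset.sum_congr rfl fun k _ => hermiteFn_sq_ode n k x,
    Finset.sum_range_sub']
  simp [gueTelescopingTerm, hermiteLadder_zero]

lemma iteratedDeriv_comp_div {f : ℝ → ℝ} {m : ℕ} (hf : ContDiff ℝ m f) (c x : ℝ) :
    iteratedDeriv m (fun y => f (y / c)) x = c⁻¹ ^ m * iteratedDeriv m f (x / c) := by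
  simp only [div_eq_inv_mul]
  exact congrFun (iteratedDeriv_comp_const_mul hf c⁻¹) x

lemma pGUEvar_ode (n : ℕ) {σ : ℝ} (hσ : σ ≠ 0) (x : ℝ) :
    σ ^ 4 * iteratedDeriv 3 (pGUEvar n σ) x + (4 * n * σ ^ 2 - x ^ 2) * deriv (pGUEvar n σ) x
      + x * pGUEvar n σ x = 0 := by
  set c := σ * √2 with hc
  have hc0 : c ≠ 0 := by positivity
  have hσ2 : σ ^ 2 = c ^ 2 / 2 := by rw [hc, mul_pow, sq_sqrt zero_le_two]; ring
  have hp : ContDiff ℝ ∞ (pGUE n) := by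
    unfold pGUE; have := contDiff_hermiteFn; fun_prop
  have hvar : pGUEvar n σ = fun y => c⁻¹ * pGUE n (y / c) := rfl
  rw [← iteratedDeriv_one, hvar, iteratedDeriv_const_mul_field, iteratedDeriv_const_mul_field,
    iteratedDeriv_comp_div (hp.of_le (by norm_cast)),
    iteratedDeriv_comp_div (hp.of_le (by norm_cast)), iteratedDeriv_one]
  calc _ = (1 / 4) * iteratedDeriv 3 (pGUE n) (x / c)
        + (2 * n - (x / c) ^ 2) * deriv (pGUE n) (x / c) + x / c * pGUE n (x / c) := by
        rw [show σ ^ 4 = (σ ^ 2) ^ 2 by ring, hσ2]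
        field_simp
        ring
    _ = 0 := pGUE_ode n (x / c)

theorem gue_density_ode_general (n : ℕ) (σ : ℝ) (hσ : 0 < σ) (x : ℝ) :
    ((1/4) * iteratedDeriv 3 (pGUE n) x + (2*n - x^2) * deriv (pGUE n) x + x * pGUE n x = 0) ∧
    (σ^4 * iteratedDeriv 3 (pGUEvar n σ) x + (4*n*σ^2 - x^2) * deriv (pGUEvar n σ) x
      + x * pGUEvar n σ x = 0) :=
  ⟨pGUE_ode n x, pGUEvar_ode n hσ.ne' x⟩

theorem gue_density_ode (n : ℕ) (hn : 1 ≤ n) (σ : ℝ) (hσ : 0 < σ) (x : ℝ) :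
    ((1/4) * iteratedDeriv 3 (pGUE n) x + (2*n - x^2) * deriv (pGUE n) x + x * pGUE n x = 0) ∧
    (σ^4 * iteratedDeriv 3 (pGUEvar n σ) x + (4*n*σ^2 - x^2) * deriv (pGUEvar n σ) x
      + x * pGUEvar n σ x = 0) :=
  gue_density_ode_general n σ hσ x
end

section
/- For every natural number n ≥ 1 and real s, ∫_ℝ e^{sx} ∑_{k=0}^{n−1} φ_k(x)² dx = n · e^{s²/4} · ₁F₁(1−n; 2; −s²/2). -/
open Real MeasureTheory

/-!
With `u = √2 x` and `t = s / √2`, each term `e^{sx} φ_k(x)²` becomes a multiple of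
`He_k(u)² e^{tu - u²/2}`, where `He_k` are the probabilists' Hermite polynomials.
For the weight `e^{tu - u²/2}` integration by parts makes multiplication by `X` adjoint to
`D + t`, so the recursion `He_{k+1} = X He_k - He_k'` gives `∫ He_k q = ∫ (D + t)^k q`.
Expanding `(D + t)^k` binomially, with `D^j He_k = k!/(k-j)! He_{k-j}` and `∫ He_m = t^m ∫ 1`,
yields `∫ He_k² e^{tu - u²/2} du = k! √(2π) e^{t²/2} ∑_m C(k,m) t^{2m}/m!`.
Summing over `k < n` with the hockey-stick identity `∑_{k<n} C(k,m) = C(n,m+1)` produces the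
terminating series `n ₁F₁(1-n; 2; -s²/2)`.
-/

open Polynomial
open scoped Nat

namespace Polynomial

theorem derivative_hermite_succ (n : ℕ) :
    derivative (hermite (n + 1)) = (n + 1) • hermite n := by
  induction n with
  | zero => simp [hermite_zero]
  | succ n ih =>
    rw [hermite_succ (n + 1), derivative_sub, derivative_mul, derivative_X, ih,
      derivative_smul, hermite_succ n]
    simp only [nsmul_eq_mul, Nat.cast_add, Nat.cast_one]
    ring

theorem derivative_hermite (n : ℕ) : derivative (hermite n) = n • hermite (n - 1) := by
  cases n with
  | zero => simp [hermite_zero]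
  | succ n => exact derivative_hermite_succ n

theorem iterate_derivative_hermite (k j : ℕ) :
    derivative^[j] (hermite k) = k.descFactorial j • hermite (k - j) := by
  induction j with
  | zero => simp
  | succ j ih =>
    rw [Function.iterate_succ_apply', ih, derivative_smul, derivative_hermite, smul_smul,
      Nat.descFactorial_succ, mul_comm, Nat.sub_sub]

end Polynomial

theorem integrable_eval_mul_exp_neg_mul_sq {b : ℝ} (hb : 0 < b) (p : ℝ[X]) :
    Integrable fun x : ℝ => p.eval x * exp (-b * x ^ 2) := by
  induction p using Polynomial.induction_on' with
  | add p q hp hq =>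
    simp only [eval_add, add_mul]
    exact hp.add hq
  | monomial n c =>
    have h := integrable_rpow_mul_exp_neg_mul_sq hb (s := n)
      (by linarith [n.cast_nonneg (α := ℝ)])
    simp only [rpow_natCast] at h
    simpa only [eval_monomial, mul_assoc] using h.const_mul c

theorem integrable_eval_mul_exp_mul_sub_sq_div_two (p : ℝ[X]) (t : ℝ) :
    Integrable fun x : ℝ => p.eval x * exp (t * x - x ^ 2 / 2) := by
  have h := ((integrable_eval_mul_exp_neg_mul_sq one_half_pos (p.comp (X + C t))).comp_sub_right
    t).const_mul (exp (t ^ 2 / 2))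
  refine h.congr (.of_forall fun x => ?_)
  simp only [eval_comp, eval_add, eval_X, eval_C, sub_add_cancel]
  rw [mul_left_comm, ← exp_add]
  ring_nf

noncomputable def tiltedGaussianIntegral (t : ℝ) : ℝ[X] →ₗ[ℝ] ℝ where
  toFun p := ∫ x, p.eval x * exp (t * x - x ^ 2 / 2)
  map_add' p q := by
    simp only [eval_add, add_mul]
    exact integral_add (integrable_eval_mul_exp_mul_sub_sq_div_two p t)
      (integrable_eval_mul_exp_mul_sub_sq_div_two q t)
  map_smul' c p := by
    simp only [eval_smul, smul_eq_mul, mul_assoc, integral_const_mul, RingHom.id_apply]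

theorem tiltedGaussianIntegral_apply (t : ℝ) (p : ℝ[X]) :
    tiltedGaussianIntegral t p = ∫ x, p.eval x * exp (t * x - x ^ 2 / 2) := rfl

theorem tiltedGaussianIntegral_one (t : ℝ) :
    tiltedGaussianIntegral t 1 = √(2 * π) * exp (t ^ 2 / 2) := by
  have h : ∀ x, exp (t * x - x ^ 2 / 2) = exp (t ^ 2 / 2) * exp (-(1 / 2) * (x - t) ^ 2) := by
    intro x
    rw [← exp_add]
    ring_nf
  simp only [tiltedGaussianIntegral_apply, eval_one, one_mul, h, integral_const_mul,
    integral_sub_right_eq_self (fun x => exp (-(1 / 2) * x ^ 2)), integral_gaussian]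
  rw [mul_comm, show π / (1 / 2) = 2 * π by ring]

noncomputable def tiltedDerivative (t : ℝ) : Module.End ℝ ℝ[X] :=
  derivative + algebraMap ℝ _ t

theorem tiltedDerivative_apply (t : ℝ) (p : ℝ[X]) :
    tiltedDerivative t p = derivative p + t • p := rfl

theorem tiltedDerivative_mul (t : ℝ) (p q : ℝ[X]) :
    tiltedDerivative t (p * q) = derivative p * q + p * tiltedDerivative t q := by
  simp only [tiltedDerivative_apply, derivative_mul, mul_add, mul_smul_comm]
  ring

theorem hasDerivAt_eval_mul_exp_mul_sub_sq_div_two (p : ℝ[X]) (t x : ℝ) :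
    HasDerivAt (fun x => p.eval x * exp (t * x - x ^ 2 / 2))
      ((tiltedDerivative t p - X * p).eval x * exp (t * x - x ^ 2 / 2)) x := by
  have hexp : HasDerivAt (fun x => exp (t * x - x ^ 2 / 2))
      ((t - x) * exp (t * x - x ^ 2 / 2)) x := by
    have := ((hasDerivAt_id x).const_mul t).sub ((hasDerivAt_pow 2 x).div_const 2)
    simpa [mul_comm] using (this.congr_deriv (by ring : _ = t - x)).exp
  refine ((p.hasDerivAt x).mul hexp).congr_deriv ?_
  simp only [tiltedDerivative_apply, eval_sub, eval_add, eval_smul, eval_mul, eval_X, smul_eq_mul]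
  ring

theorem tiltedGaussianIntegral_X_mul (t : ℝ) (p : ℝ[X]) :
    tiltedGaussianIntegral t (X * p) = tiltedGaussianIntegral t (tiltedDerivative t p) := by
  have h := integral_eq_zero_of_hasDerivAt_of_integrable
    (hasDerivAt_eval_mul_exp_mul_sub_sq_div_two p t)
    (integrable_eval_mul_exp_mul_sub_sq_div_two _ t)
    (integrable_eval_mul_exp_mul_sub_sq_div_two p t)
  rw [← tiltedGaussianIntegral_apply, map_sub, sub_eq_zero] at h
  exact h.symm


theorem tiltedGaussianIntegral_hermite_mul (t : ℝ) (n : ℕ) (q : ℝ[X]) :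
    tiltedGaussianIntegral t ((hermite n).map (algebraMap ℤ ℝ) * q) =
      tiltedGaussianIntegral t ((tiltedDerivative t ^ n) q) := by
  induction n generalizing q with
  | zero => simp [hermite_zero]
  | succ n ih =>
    set H := (hermite n).map (algebraMap ℤ ℝ)
    have hsucc : (hermite (n + 1)).map (algebraMap ℤ ℝ) * q =
        X * (H * q) - derivative H * q := by
      simp only [H, hermite_succ, Polynomial.map_sub, Polynomial.map_mul, map_X, derivative_map]
      ring
    rw [hsucc, map_sub, tiltedGaussianIntegral_X_mul, ← map_sub, tiltedDerivative_mul,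
      add_sub_cancel_left, ih, pow_succ, Module.End.mul_apply]

theorem tiltedDerivative_pow_one (t : ℝ) (n : ℕ) :
    (tiltedDerivative t ^ n) 1 = t ^ n • 1 := by
  induction n with
  | zero => simp
  | succ n ih =>
    rw [pow_succ', Module.End.mul_apply, ih, tiltedDerivative_apply, derivative_smul,
      derivative_one, smul_zero, zero_add, smul_smul, pow_succ']

theorem tiltedGaussianIntegral_hermite (t : ℝ) (n : ℕ) :
    tiltedGaussianIntegral t ((hermite n).map (algebraMap ℤ ℝ)) =
      t ^ n * tiltedGaussianIntegral t 1 := by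
  rw [← mul_one ((hermite n).map _), tiltedGaussianIntegral_hermite_mul,
    tiltedDerivative_pow_one, map_smul, smul_eq_mul]

theorem tiltedDerivative_pow_apply (t : ℝ) (n : ℕ) (q : ℝ[X]) :
    (tiltedDerivative t ^ n) q =
      ∑ m ∈ Finset.range (n + 1), (t ^ m * n.choose m) • derivative^[n - m] q := by
  rw [tiltedDerivative, add_comm, (Algebra.commute_algebraMap_left t derivative).add_pow]
  simp only [LinearMap.sum_apply, ← map_pow, Module.End.mul_apply, Module.algebraMap_end_apply,
    Module.End.natCast_apply, Module.End.pow_apply, iterate_derivative_smul,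
    ← Nat.cast_smul_eq_nsmul ℝ, smul_smul]

theorem tiltedGaussianIntegral_hermite_mul_self (t : ℝ) (k : ℕ) :
    tiltedGaussianIntegral t
        ((hermite k).map (algebraMap ℤ ℝ) * (hermite k).map (algebraMap ℤ ℝ)) =
      k ! * tiltedGaussianIntegral t 1 *
        ∑ m ∈ Finset.range (k + 1), k.choose m * ((t ^ 2) ^ m / m !) := by
  rw [tiltedGaussianIntegral_hermite_mul, tiltedDerivative_pow_apply, map_sum, Finset.mul_sum]
  refine Finset.sum_congr rfl fun m hm => ?_
  have hmk : m ≤ k := Nat.lt_succ_iff.mp (Finset.mem_range.mp hm)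
  have hfac : (m ! : ℝ) * k.descFactorial (k - m) = k ! := by
    exact_mod_cast (Nat.sub_sub_self hmk ▸ Nat.factorial_mul_descFactorial (Nat.sub_le k m))
  rw [map_smul, iterate_derivative_map, iterate_derivative_hermite, ← coe_mapRingHom,
    map_nsmul, coe_mapRingHom, map_nsmul, tiltedGaussianIntegral_hermite, Nat.sub_sub_self hmk,
    nsmul_eq_mul, smul_eq_mul, ← hfac]
  field_simp
  ring

theorem physHermite_eq_aeval_hermite (n : ℕ) (x : ℝ) :
    physHermite n x = √2 ^ n * aeval (√2 * x) (hermite n) := by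
  have hsq : (√2 * x) ^ 2 = 2 * x ^ 2 := by rw [mul_pow, sq_sqrt zero_le_two]
  have hgauss : (fun y : ℝ => exp (-y ^ 2)) = fun y => exp (-((√2 * y) ^ 2 / 2)) := by
    funext y
    rw [mul_pow, sq_sqrt zero_le_two]
    ring_nf
  have hsmooth : ContDiff ℝ n fun u : ℝ => exp (-(u ^ 2 / 2)) := by fun_prop
  rw [physHermite, hgauss, iteratedDeriv_comp_const_mul hsmooth]
  beta_reduce
  rw [iteratedDeriv_eq_iterate, deriv_gaussian_eq_hermite_mul_gaussian, hsq]
  have hexp : exp (x ^ 2) * exp (-(2 * x ^ 2 / 2)) = 1 := by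
    rw [← exp_add]; ring_nf; exact exp_zero
  have hsign : (-1 : ℝ) ^ n * (-1) ^ n = 1 := by rw [← mul_pow]; norm_num
  linear_combination
    (√2 ^ n * aeval (√2 * x) (hermite n)) * ((-1) ^ n * (-1) ^ n * hexp + hsign)

theorem hermiteFn_sq (k : ℕ) (x : ℝ) :
    hermiteFn k x ^ 2 =
      (k ! * √π)⁻¹ * ((hermite k).map (algebraMap ℤ ℝ)).eval (√2 * x) ^ 2 *
        exp (-x ^ 2) := by
  have hnorm : (√(2 ^ k * k ! * √π))⁻¹ ^ 2 * (√2 ^ k) ^ 2 = (k ! * √π)⁻¹ := by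
    rw [inv_pow, sq_sqrt (by positivity), ← pow_mul, mul_comm k, pow_mul, sq_sqrt zero_le_two]
    field_simp
  have hexp : exp (-x ^ 2 / 2) ^ 2 = exp (-x ^ 2) := by rw [← exp_nat_mul]; ring_nf
  rw [hermiteFn, physHermite_eq_aeval_hermite, eval_map_algebraMap, ← hnorm, ← hexp]
  ring

theorem integral_exp_mul_sum_hermiteFn_sq (n : ℕ) (s : ℝ) :
    ∫ x, exp (s * x) * ∑ k ∈ Finset.range n, hermiteFn k x ^ 2 =
      exp (s ^ 2 / 4) * ∑ k ∈ Finset.range n,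
        ∑ m ∈ Finset.range (k + 1), k.choose m * ((s ^ 2 / 2) ^ m / m !) := by
  set t := s / √2
  set P : ℝ[X] := ∑ k ∈ Finset.range n, (k ! * √π)⁻¹ •
    ((hermite k).map (algebraMap ℤ ℝ) * (hermite k).map (algebraMap ℤ ℝ))
  have hpoint : ∀ x, exp (s * x) * ∑ k ∈ Finset.range n, hermiteFn k x ^ 2 =
      P.eval (√2 * x) * exp (t * (√2 * x) - (√2 * x) ^ 2 / 2) := by
    intro x
    have hexp : exp (s * x) * exp (-x ^ 2) = exp (t * (√2 * x) - (√2 * x) ^ 2 / 2) := by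
      have hts : t * (√2 * x) = s * x := by
        rw [← mul_assoc, div_mul_cancel₀ s (by positivity)]
      rw [← exp_add, hts, mul_pow, sq_sqrt zero_le_two]
      ring_nf
    simp only [P, hermiteFn_sq, eval_finsetSum, eval_smul, eval_mul, smul_eq_mul,
      Finset.mul_sum, Finset.sum_mul, ← hexp]
    refine Finset.sum_congr rfl fun k _ => by ring
  have ht : t ^ 2 = s ^ 2 / 2 := by rw [div_pow, sq_sqrt zero_le_two]
  simp_rw [hpoint]
  rw [Measure.integral_comp_mul_left (fun u => P.eval u * exp (t * u - u ^ 2 / 2)),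
    ← tiltedGaussianIntegral_apply, map_sum]
  simp only [map_smul, tiltedGaussianIntegral_hermite_mul_self, tiltedGaussianIntegral_one, ht,
    smul_eq_mul, Finset.mul_sum]
  refine Finset.sum_congr rfl fun k _ => Finset.sum_congr rfl fun m _ => ?_
  rw [sqrt_mul zero_le_two, abs_of_pos (by positivity)]
  field_simp
  ring_nf

theorem sum_range_sum_choose_mul {R : Type*} [Semiring R] (N : ℕ) (f : ℕ → R) :
    ∑ k ∈ Finset.range (N + 1), ∑ m ∈ Finset.range (k + 1), k.choose m * f m =
      ∑ m ∈ Finset.range (N + 1), (N + 1).choose (m + 1) * f m := by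
  rw [Finset.sum_comm' (t' := Finset.range (N + 1)) (s' := fun m => Finset.Icc m N)
    (fun k m => by simp only [Finset.mem_range, Finset.mem_Icc]; omega)]
  simp only [← Finset.sum_mul, ← Nat.cast_sum, Nat.sum_Icc_choose]

theorem prod_range_two_add (j : ℕ) : ∏ i ∈ Finset.range j, ((2 : ℝ) + i) = (j + 1)! := by
  rw [← Finset.prod_range_add_one_eq_factorial, Finset.prod_range_succ', Nat.cast_mul,
    Nat.cast_prod]
  push_cast
  ring_nf

theorem mul_oneF1neg_two (N : ℕ) (z : ℝ) :
    (N + 1) * oneF1neg N 2 (-z) =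
      ∑ m ∈ Finset.range (N + 1), (N + 1).choose (m + 1) * (z ^ m / m !) := by
  rw [oneF1neg, Finset.mul_sum]
  refine Finset.sum_congr rfl fun j _ => ?_
  have hchoose : ((N : ℝ) + 1) * N.descFactorial j = (j + 1)! * (N + 1).choose (j + 1) := by
    exact_mod_cast (Nat.succ_descFactorial_succ N j).symm.trans
      (Nat.descFactorial_eq_factorial_mul_choose _ _)
  have hsign : (-1 : ℝ) ^ (j * 2) = 1 := by rw [pow_mul']; norm_num
  rw [prod_range_two_add]
  field_simp
  linear_combination (z ^ j) * hchoose + ((N + 1) * N.descFactorial j * z ^ j) * hsign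

theorem gue_mgf_explicit (n : ℕ) (hn : 1 ≤ n) (s : ℝ) :
    ∫ x : ℝ, Real.exp (s*x) * ∑ k ∈ Finset.range n, hermiteFn k x ^ 2 =
      n * Real.exp (s^2/4) * oneF1neg (n-1) 2 (-s^2/2) := by
  obtain ⟨N, rfl⟩ := Nat.exists_eq_add_of_le' hn
  rw [integral_exp_mul_sum_hermiteFn_sq, sum_range_sum_choose_mul, Nat.add_sub_cancel, neg_div,
    Nat.cast_succ, mul_right_comm, mul_oneF1neg_two, mul_comm]
end
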